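/- arXiv:1811.12574 — 5 statements merged into one kernel-verified Lean document; each statement's English description precedes it below -/
import Mathlib

section
/- The function λ ↦ (1/√(a+λ)) · arctan(√(−(b+λ)/(a+λ))) is strictly decreasing on the interval (−a, −b). -/
theorem stmt_1 (a b : ℝ) (ha : 0 < a) (hb : b < 0) :
    StrictAntiOn
      (fun lam : ℝ => (1 / Real.sqrt (a + lam)) *
        Real.arctan (Real.sqrt (-(b + lam) / (a + lam))))
      (Set.Ioo (-a) (-b)) := by
  intro x hx y hy hxy
  obtain ⟨hx1, hx2⟩ := hx
  obtain ⟨hy1, hy2⟩ := hy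
  have hax : 0 < a + x := by linarith
  have hay : 0 < a + y := by linarith
  have hbx : 0 < -(b + x) := by linarith
  have hby : 0 < -(b + y) := by linarith
  have hg : 1 / Real.sqrt (a + y) < 1 / Real.sqrt (a + x) := by
    apply one_div_lt_one_div_of_lt (Real.sqrt_pos.2 hax)
    exact Real.sqrt_lt_sqrt hax.le (by linarith)
  have hdiv : -(b + y) / (a + y) < -(b + x) / (a + x) := by
    rw [div_lt_div_iff₀ hay hax]
    nlinarith
  have hsq : Real.sqrt (-(b + y) / (a + y)) < Real.sqrt (-(b + x) / (a + x)) :=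
    Real.sqrt_lt_sqrt (by positivity) hdiv
  have hh : Real.arctan (Real.sqrt (-(b + y) / (a + y))) <
      Real.arctan (Real.sqrt (-(b + x) / (a + x))) :=
    Real.arctan_strictMono hsq
  have hgpos : 0 < 1 / Real.sqrt (a + y) := by positivity
  have hhpos : 0 < Real.arctan (Real.sqrt (-(b + y) / (a + y))) := by
    have := Real.arctan_strictMono (Real.sqrt_pos.2 (show (0:ℝ) < -(b + y) / (a + y) by positivity))
    simpa using this
  exact mul_lt_mul'' hg hh hgpos.le hhpos.le
end

section
/- For every L > 0 there exists a unique λ ∈ (−a, −b) satisfying L = (1/√(a+λ)) · arctan(√(−(b+λ)/(a+λ))). Moreover this λ is positive if and only if L < (1/√a) · arctan(√(−b/a)), zero if and only if L = (1/√a) · arctan(√(−b/a)), and negative if and only if L > (1/√a) · arctan(√(−b/a)). -/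
open Real Set

private lemma arctan_le_self' {x : ℝ} (hx : 0 ≤ x) : Real.arctan x ≤ x := by
  have h0 : 0 ≤ Real.arctan x := by
    rw [← Real.arctan_zero]
    exact Real.arctan_strictMono.monotone hx
  have h2 : Real.arctan x < π / 2 := Real.arctan_lt_pi_div_two x
  calc Real.arctan x ≤ Real.tan (Real.arctan x) := Real.le_tan h0 h2
    _ = x := Real.tan_arctan x

private lemma key_anti (a b x y : ℝ) (hax : -a < x) (hxy : x < y) (hyb : y < -b) :
    (1 / Real.sqrt (a + y)) * Real.arctan (Real.sqrt (-(b + y) / (a + y))) <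
    (1 / Real.sqrt (a + x)) * Real.arctan (Real.sqrt (-(b + x) / (a + x))) := by
  have hax' : 0 < a + x := by linarith
  have hay' : 0 < a + y := by linarith
  have hby' : 0 < -(b + y) := by linarith
  have hq : -(b + y) / (a + y) < -(b + x) / (a + x) := by
    rw [div_lt_div_iff₀ hay' hax']
    nlinarith
  have hqy : 0 < -(b + y) / (a + y) := div_pos hby' hay'
  have hs : Real.sqrt (-(b + y) / (a + y)) < Real.sqrt (-(b + x) / (a + x)) :=
    Real.sqrt_lt_sqrt hqy.le hq
  have hat : Real.arctan (Real.sqrt (-(b + y) / (a + y))) <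
      Real.arctan (Real.sqrt (-(b + x) / (a + x))) := Real.arctan_strictMono hs
  have hatpos : 0 < Real.arctan (Real.sqrt (-(b + y) / (a + y))) := by
    rw [← Real.arctan_zero]
    exact Real.arctan_strictMono (Real.sqrt_pos.2 hqy)
  have hg : 1 / Real.sqrt (a + y) < 1 / Real.sqrt (a + x) :=
    one_div_lt_one_div_of_lt (Real.sqrt_pos.2 hax') (Real.sqrt_lt_sqrt hax'.le (by linarith))
  have hnn : 0 ≤ 1 / Real.sqrt (a + x) := by positivity
  exact mul_lt_mul hg hat.le hatpos hnn

private lemma key_cont (a b : ℝ) : ContinuousOn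
    (fun lam => (1 / Real.sqrt (a + lam)) * Real.arctan (Real.sqrt (-(b + lam) / (a + lam))))
    {lam | 0 < a + lam} := by
  apply ContinuousOn.mul
  · apply ContinuousOn.div continuousOn_const
      ((Real.continuous_sqrt.comp (continuous_const.add continuous_id)).continuousOn)
    intro x hx
    exact (Real.sqrt_pos.2 hx).ne'
  · apply Real.continuous_arctan.comp_continuousOn
    apply ContinuousOn.sqrt
    apply ContinuousOn.div
    · exact ((continuous_const.add continuous_id).neg).continuousOn
    · exact (continuous_const.add continuous_id).continuousOn
    · intro x hx
      exact hx.ne'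

theorem stmt_3 (a b : ℝ) (ha : 0 < a) (hb : b < 0) (L : ℝ) (hL : 0 < L) :
    (∃! lam : ℝ, lam ∈ Set.Ioo (-a) (-b) ∧
        L = (1 / Real.sqrt (a + lam)) *
          Real.arctan (Real.sqrt (-(b + lam) / (a + lam)))) ∧
    (∀ lam : ℝ, lam ∈ Set.Ioo (-a) (-b) →
        L = (1 / Real.sqrt (a + lam)) *
          Real.arctan (Real.sqrt (-(b + lam) / (a + lam))) →
        ((0 < lam ↔ L < (1 / Real.sqrt a) * Real.arctan (Real.sqrt (-b / a))) ∧
         (lam = 0 ↔ L = (1 / Real.sqrt a) * Real.arctan (Real.sqrt (-b / a))) ∧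
         (lam < 0 ↔ (1 / Real.sqrt a) * Real.arctan (Real.sqrt (-b / a)) < L))) := by
  set F : ℝ → ℝ := fun lam =>
    (1 / Real.sqrt (a + lam)) * Real.arctan (Real.sqrt (-(b + lam) / (a + lam))) with hFdef
  have hπ := Real.pi_pos
  -- existence
  have hex : ∃ lam, lam ∈ Set.Ioo (-a) (-b) ∧ L = F lam := by
    set δ : ℝ := min ((a - b) / 4) ((π / (8 * L)) ^ 2) with hδdef
    set ε : ℝ := min ((a - b) / 4) ((L * (a - b) / 4) ^ 2) with hεdef
    have hab : 0 < a - b := by linarith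
    have hδ0 : 0 < δ := lt_min (by linarith) (by positivity)
    have hε0 : 0 < ε := lt_min (by linarith) (pow_pos (div_pos (mul_pos hL hab) (by norm_num)) 2)
    have hδ1 : δ ≤ (a - b) / 4 := min_le_left _ _
    have hδ2 : δ ≤ (π / (8 * L)) ^ 2 := min_le_right _ _
    have hε1 : ε ≤ (a - b) / 4 := min_le_left _ _
    have hε2 : ε ≤ (L * (a - b) / 4) ^ 2 := min_le_right _ _
    set c : ℝ := -a + δ with hcdef
    set d : ℝ := -b - ε with hddef
    have hcd : c ≤ d := by rw [hcdef, hddef]; linarith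
    have hac : a + c = δ := by rw [hcdef]; ring
    have had : a + d = a - b - ε := by rw [hddef]; ring
    have hbd : -(b + d) = ε := by rw [hddef]; ring
    have had2 : (a - b) / 2 ≤ a + d := by linarith
    have had0 : 0 < a + d := by linarith
    -- lower endpoint value is ≥ L
    have hFc : L ≤ F c := by
      have hbc : δ ≤ -(b + c) := by rw [hcdef]; linarith
      have hr : 1 ≤ -(b + c) / (a + c) := by
        rw [hac]; exact (one_le_div hδ0).2 hbc
      have hs1 : 1 ≤ Real.sqrt (-(b + c) / (a + c)) := by
        rw [show (1 : ℝ) = Real.sqrt 1 by simp]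
        exact Real.sqrt_le_sqrt hr
      have hat : π / 4 ≤ Real.arctan (Real.sqrt (-(b + c) / (a + c))) := by
        rw [← Real.arctan_one]
        exact Real.arctan_strictMono.monotone hs1
      have hsq : Real.sqrt δ ≤ π / (8 * L) := by
        calc Real.sqrt δ ≤ Real.sqrt ((π / (8 * L)) ^ 2) := Real.sqrt_le_sqrt hδ2
          _ = π / (8 * L) := Real.sqrt_sq (by positivity)
      have hsqpos : 0 < Real.sqrt δ := Real.sqrt_pos.2 hδ0
      have h8 : 8 * L / π ≤ 1 / Real.sqrt δ := by
        rw [div_le_div_iff₀ hπ hsqpos]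
        have hm := mul_le_mul_of_nonneg_left hsq (le_of_lt (by positivity : (0:ℝ) < 8 * L))
        have heq : 8 * L * (π / (8 * L)) = π := by field_simp
        linarith
      have h2L : L ≤ (8 * L / π) * (π / 4) := by
        have : (8 * L / π) * (π / 4) = 2 * L := by field_simp; ring
        rw [this]; linarith
      have hchain : (8 * L / π) * (π / 4) ≤ (1 / Real.sqrt δ) * (π / 4) :=
        mul_le_mul_of_nonneg_right h8 (by positivity)
      have hchain2 : (1 / Real.sqrt δ) * (π / 4) ≤ F c := by
        show (1 / Real.sqrt δ) * (π / 4) ≤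
          (1 / Real.sqrt (a + c)) * Real.arctan (Real.sqrt (-(b + c) / (a + c)))
        rw [hac]
        rw [hac] at hat
        exact mul_le_mul_of_nonneg_left hat (by positivity)
      linarith
    -- upper endpoint value is ≤ L
    have hFd : F d ≤ L := by
      have h1 : F d = (1 / Real.sqrt (a + d)) * Real.arctan (Real.sqrt (ε / (a + d))) := by
        rw [hFdef]; simp only [hbd]
      have h2 : Real.arctan (Real.sqrt (ε / (a + d))) ≤ Real.sqrt (ε / (a + d)) :=
        arctan_le_self' (Real.sqrt_nonneg _)
      have h3 : (1 / Real.sqrt (a + d)) * Real.sqrt (ε / (a + d)) = Real.sqrt ε / (a + d) := by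
        rw [Real.sqrt_div hε0.le, one_div, inv_mul_eq_div, div_div,
          Real.mul_self_sqrt had0.le]
      have hsqε : Real.sqrt ε ≤ L * (a - b) / 4 := by
        calc Real.sqrt ε ≤ Real.sqrt ((L * (a - b) / 4) ^ 2) := Real.sqrt_le_sqrt hε2
          _ = L * (a - b) / 4 := Real.sqrt_sq (by positivity)
      have h4 : Real.sqrt ε / (a + d) ≤ L := by
        rw [div_le_iff₀ had0]
        nlinarith
      calc F d ≤ (1 / Real.sqrt (a + d)) * Real.sqrt (ε / (a + d)) := by
            rw [h1]
            exact mul_le_mul_of_nonneg_left h2 (one_div_nonneg.2 (Real.sqrt_nonneg _))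
        _ = Real.sqrt ε / (a + d) := h3
        _ ≤ L := h4
    have hcont : ContinuousOn F (Set.Icc c d) := by
      apply (key_cont a b).mono
      intro x hx
      have := hx.1
      simp only [Set.mem_setOf_eq]
      have : c ≤ x := hx.1
      have : -a < c := by rw [hcdef]; linarith
      linarith [hx.1]
    have hLmem : L ∈ Set.Icc (F d) (F c) := ⟨hFd, hFc⟩
    obtain ⟨lam, hlam, hval⟩ := intermediate_value_Icc' hcd hcont hLmem
    refine ⟨lam, ⟨?_, ?_⟩, hval.symm⟩
    · have : -a < c := by rw [hcdef]; linarith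
      linarith [hlam.1]
    · have : d < -b := by rw [hddef]; linarith
      linarith [hlam.2]
  obtain ⟨lam0, hlam0, hval0'⟩ := hex
  have hval0 : L = (1 / Real.sqrt (a + lam0)) *
      Real.arctan (Real.sqrt (-(b + lam0) / (a + lam0))) := hval0'
  have hF0 : (1 / Real.sqrt (a + 0)) * Real.arctan (Real.sqrt (-(b + 0) / (a + 0))) =
      (1 / Real.sqrt a) * Real.arctan (Real.sqrt (-b / a)) := by norm_num
  constructor
  · refine ⟨lam0, ⟨hlam0, hval0⟩, ?_⟩
    rintro y ⟨hy, hyval⟩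
    by_contra hne
    rcases lt_or_gt_of_ne hne with h | h
    · have := key_anti a b y lam0 hy.1 h hlam0.2
      rw [← hval0, ← hyval] at this
      exact lt_irrefl _ this
    · have := key_anti a b lam0 y hlam0.1 h hy.2
      rw [← hval0, ← hyval] at this
      exact lt_irrefl _ this
  · intro lam hlam hlamval
    have h0mem : (0 : ℝ) ∈ Set.Ioo (-a) (-b) := ⟨by linarith, by linarith⟩
    have h1 : 0 < lam → L < (1 / Real.sqrt a) * Real.arctan (Real.sqrt (-b / a)) := by
      intro h
      have hk := key_anti a b 0 lam (by linarith) h hlam.2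
      rw [hF0] at hk
      rw [hlamval]; exact hk
    have h2 : lam = 0 → L = (1 / Real.sqrt a) * Real.arctan (Real.sqrt (-b / a)) := by
      intro h; rw [← hF0, hlamval, h]
    have h3 : lam < 0 → (1 / Real.sqrt a) * Real.arctan (Real.sqrt (-b / a)) < L := by
      intro h
      have hk := key_anti a b lam 0 hlam.1 h (by linarith)
      rw [hF0] at hk
      rw [hlamval]; exact hk
    refine ⟨⟨h1, fun h => ?_⟩, ⟨h2, fun h => ?_⟩, ⟨h3, fun h => ?_⟩⟩
    · rcases lt_trichotomy lam 0 with hc | hc | hc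
      · exact absurd h (not_lt.2 (h3 hc).le)
      · exact absurd h (not_lt.2 (h2 hc).ge)
      · exact hc
    · rcases lt_trichotomy lam 0 with hc | hc | hc
      · exact absurd h (ne_of_gt (h3 hc))
      · exact hc
      · exact absurd h (ne_of_lt (h1 hc))
    · rcases lt_trichotomy lam 0 with hc | hc | hc
      · exact hc
      · exact absurd h (not_lt.2 (h2 hc).le)
      · exact absurd h (not_lt.2 (h1 hc).le)
end

section
/- Let a > 0 and b < 0 be fixed and let φ be as above. If a + λ ≤ 0 or b + λ ≥ 0, then no such positive eigenfunction φ exists; i.e., the principal eigenvalue λ₁(L) necessarily lies in the open interval (−a, −b). -/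
open Set Filter

/-- A function monotone on `Ici L` with `0 < φ L` cannot tend to 0 at infinity. -/
lemma no_decay_aux (φ : ℝ → ℝ) (L : ℝ) (hposL : 0 < φ L)
    (hmono : MonotoneOn φ (Set.Ici L)) (hdecay : Tendsto φ atTop (nhds 0)) : False := by
  have h := hdecay.eventually (eventually_lt_nhds hposL)
  rcases (h.and (eventually_ge_atTop L)).exists with ⟨x, hx1, hx2⟩
  exact absurd (hmono (le_refl L : L ∈ Set.Ici L) hx2 hx2) (not_le.mpr hx1)

theorem stmt_5 (a b lam L : ℝ) (hL : 0 < L) (ha : 0 < a) (hb : b < 0)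
    (φ φ' : ℝ → ℝ)
    (hpos : ∀ x, 0 ≤ x → 0 < φ x)
    (hderiv : ∀ x ∈ Set.Ici (0:ℝ), HasDerivAt φ (φ' x) x)
    (hderiv'cont : ContinuousOn φ' (Set.Ici 0))
    (hode1 : ∀ x ∈ Set.Ioo 0 L, HasDerivAt φ' (-((a + lam) * φ x)) x)
    (hode2 : ∀ x ∈ Set.Ioi L, HasDerivAt φ' (-((b + lam) * φ x)) x)
    (hN : φ' 0 = 0)
    (hdecay : Tendsto φ atTop (nhds 0)) :
    -a < lam ∧ lam < -b := by
  have hcontφ : ContinuousOn φ (Set.Ici 0) :=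
    fun x hx => (hderiv x hx).continuousAt.continuousWithinAt
  have hφL : 0 < φ L := hpos L hL.le
  -- key: from φ' ≥ 0 on Ici L, derive contradiction
  have key : ¬ (∀ x ∈ Set.Ici L, 0 ≤ φ' x) := by
    intro h
    have hmono : MonotoneOn φ (Set.Ici L) := by
      apply monotoneOn_of_hasDerivWithinAt_nonneg (convex_Ici L)
        (hcontφ.mono (fun x hx => le_trans hL.le hx)) (f' := φ')
      · intro x hx
        rw [interior_Ici] at hx
        exact (hderiv x (le_trans hL.le (le_of_lt hx))).hasDerivWithinAt
      · intro x hx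
        rw [interior_Ici] at hx
        exact h x (le_of_lt hx : L ≤ x)
    exact no_decay_aux φ L hφL hmono hdecay
  constructor
  · -- show -a < lam; suppose lam ≤ -a
    by_contra hcon
    push_neg at hcon
    have hal : a + lam ≤ 0 := by linarith
    have hbl : b + lam < 0 := by linarith
    -- φ' monotone on [0, L]
    have hm1 : MonotoneOn φ' (Set.Icc 0 L) := by
      apply monotoneOn_of_hasDerivWithinAt_nonneg (convex_Icc 0 L)
        (hderiv'cont.mono (fun x hx => hx.1)) (f' := fun x => -((a + lam) * φ x))
      · intro x hx
        rw [interior_Icc] at hx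
        exact (hode1 x hx).hasDerivWithinAt
      · intro x hx
        rw [interior_Icc] at hx
        have := hpos x hx.1.le
        nlinarith
    have hφ'L : 0 ≤ φ' L := by
      have := hm1 (Set.mem_Icc.mpr ⟨le_refl 0, hL.le⟩) (Set.mem_Icc.mpr ⟨hL.le, le_refl L⟩) hL.le
      rwa [hN] at this
    -- φ' monotone on Ici L
    have hm2 : MonotoneOn φ' (Set.Ici L) := by
      apply monotoneOn_of_hasDerivWithinAt_nonneg (convex_Ici L)
        (hderiv'cont.mono (fun x hx => le_trans hL.le hx)) (f' := fun x => -((b + lam) * φ x))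
      · intro x hx
        rw [interior_Ici] at hx
        exact (hode2 x hx).hasDerivWithinAt
      · intro x hx
        rw [interior_Ici] at hx
        have := hpos x (le_trans hL.le hx.le)
        nlinarith
    exact key (fun x hx => le_trans hφ'L (hm2 (le_refl L : L ∈ Set.Ici L) hx hx))
  · -- show lam < -b; suppose b + lam ≥ 0
    by_contra hcon
    push_neg at hcon
    have hbl : 0 ≤ b + lam := by linarith
    -- φ' antitone on Ici L
    have hm2 : AntitoneOn φ' (Set.Ici L) := by
      apply antitoneOn_of_hasDerivWithinAt_nonpos (convex_Ici L)
        (hderiv'cont.mono (fun x hx => le_trans hL.le hx)) (f' := fun x => -((b + lam) * φ x))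
      · intro x hx
        rw [interior_Ici] at hx
        exact (hode2 x hx).hasDerivWithinAt
      · intro x hx
        rw [interior_Ici] at hx
        have := hpos x (le_trans hL.le hx.le)
        nlinarith
    apply key
    intro x0 hx0
    by_contra hneg
    push_neg at hneg
    obtain ⟨c, hc⟩ : ∃ c, c = φ' x0 := ⟨_, rfl⟩
    rw [← hc] at hneg
    -- for x ≥ x0, φ' x ≤ c, hence φ x ≤ φ x0 + c (x - x0)
    have hanti : AntitoneOn (fun x => φ x - c * x) (Set.Ici x0) := by
      apply antitoneOn_of_hasDerivWithinAt_nonpos (convex_Ici x0)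
        (f' := fun x => φ' x - c)
      · apply ContinuousOn.sub
        · exact hcontφ.mono (fun y hy => le_trans (le_trans hL.le hx0) hy)
        · exact (continuous_const.mul continuous_id).continuousOn
      · intro x hx
        rw [interior_Ici] at hx
        have hx0le : (0:ℝ) ≤ x := le_trans (le_trans hL.le hx0) hx.le
        exact (((hderiv x hx0le).sub ((hasDerivAt_id x).const_mul c)).congr_deriv
          (by ring)).hasDerivWithinAt
      · intro x hx
        rw [interior_Ici] at hx
        have := hm2 hx0 (le_trans hx0 hx.le : L ≤ x) hx.le
        linarith
    -- choose x large enough that φ x0 + c (x - x0) < 0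
    have hcpos : 0 < -c := by linarith
    obtain ⟨x, hx⟩ : ∃ x, x = x0 + (φ x0) / (-c) + 1 := ⟨_, rfl⟩
    have hdnn : 0 ≤ φ x0 / (-c) := div_nonneg (hpos x0 (le_trans hL.le hx0)).le hcpos.le
    have hxge : x0 ≤ x := by rw [hx]; linarith
    have h1 := hanti (le_refl x0 : x0 ∈ Set.Ici x0) hxge hxge
    simp only at h1
    have h2 : φ x ≤ φ x0 + c * (x - x0) := by linarith
    have h3 : c * (x - x0) = -(φ x0) + c := by
      have hxx : x - x0 = φ x0 / (-c) + 1 := by rw [hx]; ring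
      rw [hxx]
      have hc0 : c ≠ 0 := hneg.ne
      field_simp
    have hφx : φ x ≤ c := by rw [h3] at h2; linarith
    exact absurd (hpos x (le_trans (le_trans hL.le hx0) hxge)) (by linarith)
end

section
/- The improper integral ∫₀^{θ*} dr / √(2 ∫_r^{θ*} f(s) ds) is finite. -/
/-!
Since `f > 0` on `(0, θ*]`, the inner integral `∫_r^{θ*} f` is bounded below by `m (θ* - r)`
for some `m > 0` uniformly in `r ∈ (0, θ*)`: near `θ*` because `f` is bounded below there by
compactness, and away from `θ*` because the integral only grows as `r` decreases. The integrand is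
therefore dominated by a multiple of `(θ* - r)^(-1/2)`, which is integrable.
-/

open MeasureTheory Set intervalIntegral

lemma integrableOn_rpow_neg_half_sub (a b : ℝ) :
    IntegrableOn (fun r : ℝ => (b - r) ^ (-(1 / 2) : ℝ)) (Ioo a b) := by
  rcases le_or_gt a b with hab | hba
  · have h := (intervalIntegrable_rpow' (a := b - a) (b := 0) (r := -(1 / 2)) (by norm_num))
    have h' := h.comp_sub_left b
    rw [sub_sub_cancel, sub_zero] at h'
    exact (intervalIntegrable_iff_integrableOn_Ioo_of_le hab).mp h'
  · simp [Ioo_eq_empty_of_le hba.le]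

lemma integrableOn_one_div_sqrt_of_mul_sub_le {g : ℝ → ℝ} {a b m : ℝ} (hm : 0 < m)
    (hg : ContinuousOn g (Ioo a b)) (hle : ∀ r ∈ Ioo a b, m * (b - r) ≤ g r) :
    IntegrableOn (fun r => 1 / √(g r)) (Ioo a b) := by
  refine ((integrableOn_rpow_neg_half_sub a b).const_mul (√m)⁻¹).mono' ?_ ?_
  · have hg_pos : ∀ r ∈ Ioo a b, 0 < g r := fun r hr =>
      (mul_pos hm (sub_pos.mpr hr.2)).trans_le (hle r hr)
    refine ContinuousOn.aestronglyMeasurable ?_ measurableSet_Ioo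
    exact (hg.sqrt.inv₀ fun r hr => (Real.sqrt_pos.mpr (hg_pos r hr)).ne').congr fun r _ => one_div _
  · refine (ae_restrict_iff' measurableSet_Ioo).mpr (.of_forall fun r hr => ?_)
    have hbr : 0 < b - r := sub_pos.mpr hr.2
    have hpos : 0 < √(m * (b - r)) := by positivity
    calc ‖1 / √(g r)‖ = 1 / √(g r) := Real.norm_of_nonneg (by positivity)
      _ ≤ 1 / √(m * (b - r)) := one_div_le_one_div_of_le hpos (Real.sqrt_le_sqrt (hle r hr))
      _ = (√m)⁻¹ * (b - r) ^ (-(1 / 2) : ℝ) := by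
        rw [Real.sqrt_mul hm.le, Real.rpow_neg hbr.le, ← Real.sqrt_eq_rpow, one_div, mul_inv]

lemma exists_pos_mul_sub_le_integral {f : ℝ → ℝ} {a b : ℝ} (hab : a < b)
    (hf : ContinuousOn f (Ioc a b)) (hpos : ∀ x ∈ Ioc a b, 0 < f x) :
    ∃ m > 0, ∀ r ∈ Ioc a b, m * (b - r) ≤ ∫ s in r..b, f s := by
  set c := (a + b) / 2 with hc
  have hcb : Icc c b ⊆ Ioc a b := Icc_subset_Ioc (by linarith [hc]) le_rfl
  obtain ⟨x₀, hx₀, hmin⟩ :=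
    isCompact_Icc.exists_isMinOn (nonempty_Icc.mpr (by linarith [hc])) (hf.mono hcb)
  refine ⟨f x₀ / 2, half_pos (hpos x₀ (hcb hx₀)), fun r hr => ?_⟩
  set s := max r c
  have hs : s ∈ Icc c b := ⟨le_max_right _ _, max_le hr.2 (by linarith)⟩
  have hint : IntervalIntegrable f volume r b :=
    (hf.mono (Icc_subset_Ioc hr.1 le_rfl)).intervalIntegrable_of_Icc hr.2
  -- `b - max r c ≥ (b - r) / 2`, so halving the minimum of `f` on `[c, b]` covers every `r`.
  calc f x₀ / 2 * (b - r) ≤ f x₀ * (b - s) := by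
        have : 0 ≤ f x₀ := (hpos x₀ (hcb hx₀)).le
        have : s ≤ (b + r) / 2 := max_le (by linarith [hr.2]) (by linarith [hr.1, hc])
        nlinarith
    _ = ∫ _ in s..b, f x₀ := by simp [mul_comm]
    _ ≤ ∫ t in s..b, f t :=
        integral_mono_on hs.2 intervalIntegrable_const
          ((hf.mono ((Icc_subset_Icc_left hs.1).trans hcb)).intervalIntegrable_of_Icc hs.2)
          fun t ht => hmin ⟨hs.1.trans ht.1, ht.2⟩
    _ ≤ ∫ t in r..b, f t := by
        refine integral_mono_interval (le_max_left _ _) hs.2 le_rfl ?_ hint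
        refine (ae_restrict_iff' measurableSet_Ioc).mpr (.of_forall fun t ht => ?_)
        exact (hpos t ⟨hr.1.trans ht.1, ht.2⟩).le

theorem stmt_6_general (f : ℝ → ℝ) (θs : ℝ) (hf : ContDiff ℝ 1 f)
    (hfpos : ∀ u ∈ Set.Ioo (0:ℝ) 1, 0 < f u)
    (hθs : θs ∈ Set.Ioo (0:ℝ) 1) :
    MeasureTheory.IntegrableOn
      (fun r : ℝ => 1 / Real.sqrt (2 * ∫ s in r..θs, f s))
      (Set.Ioo 0 θs) := by
  obtain ⟨hθ0, hθ1⟩ := hθs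
  have hfc : Continuous f := hf.continuous
  obtain ⟨m, hm, hle⟩ := exists_pos_mul_sub_le_integral hθ0 hfc.continuousOn
    fun u hu => hfpos u ⟨hu.1, hu.2.trans_lt hθ1⟩
  have hcont : ContinuousOn (fun r => ∫ s in r..θs, f s) (Ioo 0 θs) :=
    (continuousOn_primitive_interval_left (a := 0) hfc.integrableOn_uIcc).mono
      (uIcc_of_le hθ0.le ▸ Ioo_subset_Icc_self)
  exact integrableOn_one_div_sqrt_of_mul_sub_le (mul_pos two_pos hm)
    (continuousOn_const.mul hcont) fun r hr => by linarith [hle r (Ioo_subset_Ioc_self hr)]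

theorem stmt_6 (f : ℝ → ℝ) (θs : ℝ) (hf : ContDiff ℝ 1 f)
    (hf0 : f 0 = 0) (hf1 : f 1 = 0) (hf'0 : 0 < deriv f 0)
    (hfpos : ∀ u ∈ Set.Ioo (0:ℝ) 1, 0 < f u)
    (hθs : θs ∈ Set.Ioo (0:ℝ) 1) :
    MeasureTheory.IntegrableOn
      (fun r : ℝ => 1 / Real.sqrt (2 * ∫ s in r..θs, f s))
      (Set.Ioo 0 θs) :=
  stmt_6_general f θs hf hfpos hθs
end

section
/- If U is a C¹ function on [0,∞), decreasing, with U'' + f(U) = 0 on (0,L), U'' + g(U) = 0 on (L,∞), U'(0) = 0, U > 0, and U(∞) = 0, and if on (L, ∞) the trajectory of U lies on the curve p² = −2∫₀^q g(v)dv, then U(0) < θ*. -/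
/-!
Along a solution, the energy `E = U'²/2 + G(U)` with `G q = ∫₀^q g` satisfies
`E' = U' (g(U) - f(U))` on `(0, L)`, which is positive there: `U'' = -f(U) < 0` makes `U' < 0`,
and `g < f`. On `(L, ∞)` the trajectory condition says `E = 0`, hence `E(L) = 0`, because `U'` is
continuous up to `L` from both sides (`U''` is bounded near `L`). The same condition forces
`U(L) ≤ θ*`: `G > 0` on `(θ*, 1]`, while every value in `(0, U(L))` is taken beyond `L`, where
`G(U) = -U'²/2 ≤ 0`. So if `U(0) ≥ θ*`, some `a ∈ [0, L)` has `U(a) ∈ [θ*, 1]`, and then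
`0 ≤ G(U(a)) ≤ E(a) < E(L) = 0`.
-/

open Filter Set Topology

theorem abs_deriv_sub_slope_le {u u' w : ℝ → ℝ} {a x C : ℝ} (hx : x ≠ a)
    (hu : ∀ y ∈ uIcc a x, HasDerivAt u (u' y) y)
    (hu' : ∀ y ∈ uIcc a x, y ≠ a → HasDerivAt u' (w y) y)
    (hw : ∀ y ∈ uIcc a x, y ≠ a → |w y| ≤ C) :
    |u' x - slope u a x| ≤ C * |x - a| := by
  have hcont : ContinuousOn u (uIcc a x) := fun y hy => (hu y hy).continuousAt.continuousWithinAt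
  obtain ⟨ξ, hξ, hξx, hsub⟩ : ∃ ξ, u' ξ = slope u a x ∧ |x - ξ| ≤ |x - a| ∧
      ∀ y ∈ uIcc ξ x, y ∈ uIcc a x ∧ y ≠ a := by
    rcases hx.lt_or_gt with h | h
    · rw [uIcc_of_ge h.le] at hu hcont
      obtain ⟨ξ, hξ, hξs⟩ := exists_hasDerivAt_eq_slope u u' h hcont
        fun y hy => hu y (Ioo_subset_Icc_self hy)
      refine ⟨ξ, by rw [slope_comm, slope_def_field, hξs], ?_, fun y hy => ?_⟩
      · rw [abs_of_neg (by linarith [hξ.1]), abs_of_neg (by linarith)]; linarith [hξ.2]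
      · rw [uIcc_of_ge hξ.1.le] at hy
        rw [uIcc_of_ge h.le]
        exact ⟨⟨hy.1, hy.2.trans hξ.2.le⟩, by linarith [hy.2, hξ.2]⟩
    · rw [uIcc_of_le h.le] at hu hcont
      obtain ⟨ξ, hξ, hξs⟩ := exists_hasDerivAt_eq_slope u u' h hcont
        fun y hy => hu y (Ioo_subset_Icc_self hy)
      refine ⟨ξ, by rw [slope_def_field, hξs], ?_, fun y hy => ?_⟩
      · rw [abs_of_pos (by linarith [hξ.2]), abs_of_pos (by linarith)]; linarith [hξ.1]
      · rw [uIcc_of_le hξ.2.le] at hy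
        rw [uIcc_of_le h.le]
        exact ⟨⟨hξ.1.le.trans hy.1, hy.2⟩, by linarith [hy.1, hξ.1]⟩
  have hC : 0 ≤ C := (abs_nonneg _).trans (hw x right_mem_uIcc hx)
  have hlip : ‖u' x - u' ξ‖ ≤ C * ‖x - ξ‖ :=
    (convex_uIcc ξ x).norm_image_sub_le_of_norm_hasDerivWithin_le
      (fun y hy => (hu' y (hsub y hy).1 (hsub y hy).2).hasDerivWithinAt)
      (fun y hy => hw y (hsub y hy).1 (hsub y hy).2) left_mem_uIcc right_mem_uIcc
  calc |u' x - slope u a x| = ‖u' x - u' ξ‖ := by rw [hξ, Real.norm_eq_abs]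
    _ ≤ C * |x - ξ| := hlip
    _ ≤ C * |x - a| := mul_le_mul_of_nonneg_left hξx hC

theorem continuousWithinAt_deriv_of_bounded_deriv {u u' w : ℝ → ℝ} {t : Set ℝ} {a C : ℝ}
    (ht : t.OrdConnected) (ha : a ∈ t)
    (hu : ∀ y ∈ t, HasDerivAt u (u' y) y)
    (hu' : ∀ y ∈ t, y ≠ a → HasDerivAt u' (w y) y)
    (hw : ∀ y ∈ t, y ≠ a → |w y| ≤ C) :
    ContinuousWithinAt u' t a := by
  rw [← continuousWithinAt_sdiff_self, ContinuousWithinAt]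
  have hslope : Tendsto (slope u a) (𝓝[t \ {a}] a) (𝓝 (u' a)) :=
    (hasDerivAt_iff_tendsto_slope.mp (hu a ha)).mono_left
      (nhdsWithin_mono _ fun y hy => hy.2)
  have hbound : Tendsto (fun x => C * |x - a|) (𝓝[t \ {a}] a) (𝓝 0) :=
    tendsto_nhdsWithin_of_tendsto_nhds
      ((Continuous.tendsto' (by fun_prop) a 0) (by simp))
  have herr : Tendsto (fun x => u' x - slope u a x) (𝓝[t \ {a}] a) (𝓝 0) := by
    refine squeeze_zero_norm' ?_ hbound
    filter_upwards [self_mem_nhdsWithin] with x hx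
    have hsub := ht.uIcc_subset ha hx.1
    exact abs_deriv_sub_slope_le hx.2 (fun y hy => hu y (hsub hy))
      (fun y hy => hu' y (hsub hy)) (fun y hy => hw y (hsub hy))
  simpa only [add_sub_cancel, add_zero] using hslope.add herr

theorem continuousOn_deriv_Icc_of_hasDerivAt_Ioo {u u' w : ℝ → ℝ} {a b : ℝ} (hab : a < b)
    (hu : ∀ y ∈ Icc a b, HasDerivAt u (u' y) y)
    (hu' : ∀ y ∈ Ioo a b, HasDerivAt u' (w y) y)
    (hw : ContinuousOn w (Icc a b)) :
    ContinuousOn u' (Icc a b) := by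
  obtain ⟨C, hC⟩ := isCompact_Icc.exists_bound_of_continuousOn hw
  intro x hx
  rcases hx.1.eq_or_lt with rfl | hax
  · rw [continuousWithinAt_Icc_iff_Ici hab, ← continuousWithinAt_Ico_iff_Ici hab]
    exact continuousWithinAt_deriv_of_bounded_deriv ordConnected_Ico ⟨le_rfl, hab⟩
      (fun y hy => hu y (Ico_subset_Icc_self hy))
      (fun y hy hya => hu' y ⟨lt_of_le_of_ne hy.1 hya.symm, hy.2⟩)
      (fun y hy _ => hC y (Ico_subset_Icc_self hy))
  rcases hx.2.eq_or_lt with rfl | hxb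
  · rw [continuousWithinAt_Icc_iff_Iic hab, ← continuousWithinAt_Ioc_iff_Iic hab]
    exact continuousWithinAt_deriv_of_bounded_deriv ordConnected_Ioc ⟨hab, le_rfl⟩
      (fun y hy => hu y (Ioc_subset_Icc_self hy))
      (fun y hy hya => hu' y ⟨hy.1, lt_of_le_of_ne hy.2 hya⟩)
      (fun y hy _ => hC y (Ioc_subset_Icc_self hy))
  exact (hu' x ⟨hax, hxb⟩).continuousAt.continuousWithinAt

theorem HasDerivAt.nonpos_of_antitoneOn_Ici {u : ℝ → ℝ} {u' x : ℝ} (hd : HasDerivAt u u' x)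
    (hu : AntitoneOn u (Ici x)) : u' ≤ 0 :=
  hd.hasDerivWithinAt.nonpos_of_antitoneOn
    (accPt_principal_iff_nhdsWithin.mpr (by rw [Ici_sdiff_left]; infer_instance)) hu

theorem exists_mem_Ico_apply_mem_Icc {u : ℝ → ℝ} {a b c d : ℝ} (hab : a < b)
    (hu : ContinuousOn u (Icc a b)) (hb : u b < d) (hcd : c ≤ d) (hc : c ≤ u a) :
    ∃ x ∈ Ico a b, u x ∈ Icc c d := by
  rcases lt_or_ge (u a) d with had | hda
  · exact ⟨a, ⟨le_rfl, hab⟩, hc, had.le⟩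
  · obtain ⟨x, hx, hux⟩ := intermediate_value_Ico' hab.le hu ⟨hb, hda⟩
    exact ⟨x, hx, by rw [hux]; exact ⟨hcd, le_rfl⟩⟩

noncomputable def energy (G U U' : ℝ → ℝ) (x : ℝ) : ℝ := U' x ^ 2 / 2 + G (U x)

theorem strictMonoOn_energy {f g G U U' : ℝ → ℝ} {a b : ℝ}
    (hG : ∀ q, HasDerivAt G (g q) q)
    (hU : ∀ x ∈ Icc a b, HasDerivAt U (U' x) x)
    (hU' : ContinuousOn U' (Icc a b))
    (hode : ∀ x ∈ Ioo a b, HasDerivAt U' (-f (U x)) x)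
    (hU'a : U' a ≤ 0)
    (hf : ∀ x ∈ Ioo a b, 0 < f (U x))
    (hgf : ∀ x ∈ Ioo a b, g (U x) < f (U x)) :
    StrictMonoOn (energy G U U') (Icc a b) := by
  have hanti : StrictAntiOn U' (Icc a b) := by
    refine strictAntiOn_of_deriv_neg (convex_Icc a b) hU' fun x hx => ?_
    rw [interior_Icc] at hx
    rw [(hode x hx).deriv]
    linarith [hf x hx]
  have hE : ∀ x ∈ Ioo a b, HasDerivAt (energy G U U') (U' x * (g (U x) - f (U x))) x := by
    intro x hx
    have h := (((hode x hx).fun_pow 2).div_const 2).add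
      ((hG (U x)).comp x (hU x (Ioo_subset_Icc_self hx)))
    exact h.congr_deriv (by ring)
  have hUcont : ContinuousOn U (Icc a b) := fun x hx => (hU x hx).continuousAt.continuousWithinAt
  refine strictMonoOn_of_deriv_pos (convex_Icc a b)
    (((hU'.pow 2).div_const 2).add
      ((continuous_iff_continuousAt.mpr fun q => (hG q).continuousAt).comp_continuousOn hUcont))
    fun x hx => ?_
  rw [interior_Icc] at hx
  rw [(hE x hx).deriv]
  have hU'x : U' x < 0 :=
    (hanti ⟨le_rfl, hx.1.le.trans hx.2.le⟩ (Ioo_subset_Icc_self hx) hx.1).trans_le hU'a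
  exact mul_pos_of_neg_of_neg hU'x (sub_neg.mpr (hgf x hx))

theorem energy_eq_zero_of_trajectory {G U U' : ℝ → ℝ} {L : ℝ} (hG : Continuous G)
    (hU : ContinuousAt U L) (hU' : ContinuousWithinAt U' (Ici L) L)
    (htraj : ∀ x, L < x → U' x ^ 2 = -2 * G (U x)) :
    energy G U U' L = 0 := by
  have hE : ContinuousWithinAt (energy G U U') (Ioi L) L :=
    (((hU'.pow 2).div_const 2).add (hG.continuousAt.comp_continuousWithinAt
      hU.continuousWithinAt)).mono Ioi_subset_Ici_self
  refine tendsto_nhds_unique hE (tendsto_const_nhds.congr' ?_)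
  filter_upwards [self_mem_nhdsWithin] with x hx
  simp only [energy, htraj x hx]
  ring

theorem nonpos_of_trajectory {G U U' : ℝ → ℝ} {L q : ℝ} (hU : ContinuousOn U (Ici L))
    (hdecay : Tendsto U atTop (𝓝 0))
    (htraj : ∀ x, L < x → U' x ^ 2 = -2 * G (U x)) (hq : q ∈ Ioo 0 (U L)) :
    G q ≤ 0 := by
  obtain ⟨T, hLT, hUT⟩ := ((eventually_gt_atTop L).and (hdecay.eventually_lt_const hq.1)).exists
  obtain ⟨x, hx, rfl⟩ := intermediate_value_Ioc' hLT.le (hU.mono Icc_subset_Ici_self)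
    ⟨hUT.le, hq.2⟩
  nlinarith [htraj x hx.1, sq_nonneg (U' x)]

theorem integral_pos_of_integral_eq_zero {g : ℝ → ℝ} {b q : ℝ} (hg : Continuous g)
    (hb : ∫ s in (0:ℝ)..b, g s = 0) (hbq : b < q) (hpos : ∀ u ∈ Ioo b q, 0 < g u) :
    0 < ∫ s in (0:ℝ)..q, g s := by
  rw [← intervalIntegral.integral_add_adjacent_intervals (hg.intervalIntegrable 0 b)
    (hg.intervalIntegrable b q), hb, zero_add]
  exact intervalIntegral.intervalIntegral_pos_of_pos_on (hg.intervalIntegrable b q) hpos hbq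

theorem apply_le_of_trajectory {G U U' : ℝ → ℝ} {L b c : ℝ} (hb : 0 < b) (hbc : b < c)
    (hG : ∀ q ∈ Ioc b c, 0 < G q) (hU : ContinuousOn U (Ici L))
    (hdecay : Tendsto U atTop (𝓝 0))
    (htraj : ∀ x, L < x → U' x ^ 2 = -2 * G (U x)) :
    U L ≤ b := by
  by_contra! h
  obtain ⟨q, hbq, hq⟩ := exists_between (lt_min h hbc)
  exact (hG q ⟨hbq, hq.le.trans (min_le_right _ _)⟩).not_ge <|
    nonpos_of_trajectory hU hdecay htraj ⟨hb.trans hbq, hq.trans_le (min_le_left _ _)⟩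

theorem stmt_19_general (f g : ℝ → ℝ) (θ θs L : ℝ) (hL : 0 < L)
    (hf : Continuous f) (hg : Continuous g)
    (hfpos : ∀ u ∈ Set.Ioo (0:ℝ) 1, 0 < f u)
    (hθ : θ ∈ Set.Ioo (0:ℝ) 1) (hθs : θs ∈ Set.Ioo θ 1)
    (hgpos : ∀ u ∈ Set.Ioo θ 1, 0 < g u)
    (hbal : (∫ s in (0:ℝ)..θs, g s) = 0)
    (hlt : ∀ u ∈ Set.Ioo (0:ℝ) 1, g u < f u)
    (U U' : ℝ → ℝ)
    (hderiv : ∀ x ∈ Set.Ici (0:ℝ), HasDerivAt U (U' x) x)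
    (hode1 : ∀ x ∈ Set.Ioo 0 L, HasDerivAt U' (-(f (U x))) x)
    (hode2 : ∀ x ∈ Set.Ioi L, HasDerivAt U' (-(g (U x))) x)
    (hpos : ∀ x, 0 ≤ x → 0 < U x)
    (hdec : StrictAntiOn U (Set.Ici 0))
    (hdecay : Tendsto U atTop (nhds 0))
    (htraj : ∀ x, L < x → (U' x) ^ 2 = -2 * ∫ v in (0:ℝ)..(U x), g v) :
    U 0 < θs := by
  set G : ℝ → ℝ := fun q => ∫ v in (0:ℝ)..q, g v
  have hG : ∀ q, HasDerivAt G (g q) q := fun q => (hg.integral_hasStrictDerivAt 0 q).hasDerivAt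
  have hGpos : ∀ q ∈ Ioc θs 1, 0 < G q := fun q hq => integral_pos_of_integral_eq_zero hg hbal
    hq.1 fun u hu => hgpos u ⟨hθs.1.trans hu.1, hu.2.trans_le hq.2⟩
  have hU : ContinuousOn U (Ici 0) := fun x hx => (hderiv x hx).continuousAt.continuousWithinAt
  have hU'₁ : ContinuousOn U' (Icc 0 L) :=
    continuousOn_deriv_Icc_of_hasDerivAt_Ioo hL (fun x hx => hderiv x hx.1) hode1
      (hf.comp_continuousOn (hU.mono Icc_subset_Ici_self)).neg
  have hU'₂ : ContinuousOn U' (Icc L (L + 1)) :=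
    continuousOn_deriv_Icc_of_hasDerivAt_Ioo (lt_add_one L) (fun x hx => hderiv x (hL.le.trans hx.1))
      (fun x hx => hode2 x hx.1) (hg.comp_continuousOn (hU.mono fun x hx => hL.le.trans hx.1)).neg
  have hEL : energy G U U' L = 0 :=
    energy_eq_zero_of_trajectory (continuous_iff_continuousAt.mpr fun q => (hG q).continuousAt)
      (hderiv L hL.le).continuousAt
      ((continuousWithinAt_Icc_iff_Ici (lt_add_one L)).mp (hU'₂ L ⟨le_rfl, (lt_add_one L).le⟩))
      htraj
  have hUL : U L ≤ θs := apply_le_of_trajectory (hθ.1.trans hθs.1) hθs.2 hGpos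
    (hU.mono fun x hx => hL.le.trans hx) hdecay htraj
  by_contra! h0
  obtain ⟨a, ha, hUa⟩ := exists_mem_Ico_apply_mem_Icc hL (hU.mono Icc_subset_Ici_self)
    (hUL.trans_lt hθs.2) hθs.2.le h0
  have hGa : 0 ≤ G (U a) := hUa.1.eq_or_lt.elim (fun h => h ▸ hbal.ge)
    fun h => (hGpos _ ⟨h, hUa.2⟩).le
  have hUx : ∀ x ∈ Ioo a L, U x ∈ Ioo 0 1 := fun x hx =>
    ⟨hpos x (ha.1.trans hx.1.le), (hdec ha.1 (ha.1.trans hx.1.le) hx.1).trans_le hUa.2⟩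
  have hEa : energy G U U' a < energy G U U' L :=
    strictMonoOn_energy hG (fun x hx => hderiv x (ha.1.trans hx.1))
      (hU'₁.mono (Icc_subset_Icc_left ha.1)) (fun x hx => hode1 x ⟨ha.1.trans_lt hx.1, hx.2⟩)
      ((hderiv a ha.1).nonpos_of_antitoneOn_Ici (hdec.antitoneOn.mono (Ici_subset_Ici.mpr ha.1)))
      (fun x hx => hfpos _ (hUx x hx)) (fun x hx => hlt _ (hUx x hx))
      ⟨le_rfl, ha.2.le⟩ ⟨ha.2.le, le_rfl⟩ ha.2
  rw [hEL, energy] at hEa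
  nlinarith [sq_nonneg (U' a)]

theorem stmt_19 (f g : ℝ → ℝ) (θ θs L : ℝ) (hL : 0 < L)
    (hf : Continuous f) (hg : Continuous g)
    (hf0 : f 0 = 0) (hf1 : f 1 = 0)
    (hfpos : ∀ u ∈ Set.Ioo (0:ℝ) 1, 0 < f u)
    (hθ : θ ∈ Set.Ioo (0:ℝ) 1) (hθs : θs ∈ Set.Ioo θ 1)
    (hg0 : g 0 = 0) (hgθ : g θ = 0) (hg1 : g 1 = 0)
    (hgneg : ∀ u ∈ Set.Ioo 0 θ, g u < 0)
    (hgpos : ∀ u ∈ Set.Ioo θ 1, 0 < g u)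
    (hbal : (∫ s in (0:ℝ)..θs, g s) = 0)
    (hlt : ∀ u ∈ Set.Ioo (0:ℝ) 1, g u < f u)
    (U U' : ℝ → ℝ)
    (hderiv : ∀ x ∈ Set.Ici (0:ℝ), HasDerivAt U (U' x) x)
    (hode1 : ∀ x ∈ Set.Ioo 0 L, HasDerivAt U' (-(f (U x))) x)
    (hode2 : ∀ x ∈ Set.Ioi L, HasDerivAt U' (-(g (U x))) x)
    (hN : U' 0 = 0)
    (hpos : ∀ x, 0 ≤ x → 0 < U x)
    (hdec : StrictAntiOn U (Set.Ici 0))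
    (hdecay : Tendsto U atTop (nhds 0))
    (htraj : ∀ x, L < x → (U' x) ^ 2 = -2 * ∫ v in (0:ℝ)..(U x), g v) :
    U 0 < θs :=
  stmt_19_general f g θ θs L hL hf hg hfpos hθ hθs hgpos hbal hlt U U' hderiv hode1 hode2 hpos hdec
    hdecay htraj
end
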